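/- arXiv:1912.01597 — 2 statements merged into one kernel-verified Lean document; each statement's English description precedes it below -/
import Mathlib

section
/- Under the same setup (each fᵢ with H-Lipschitz Hessian, M ≥ H, f = (1/n)∑fᵢ μ-strongly convex with minimizer x⋆, x⁺ the minimizer of the cubically regularized model), f(x⁺) − f(x⋆) ≤ (√2(M+H)/(3μ^{3/2})) · (1/n)∑ᵢ (f(wᵢ) − f(x⋆))^{3/2}. -/
/-!
Taylor's theorem with an `H`-Lipschitz Hessian says that each `fᵢ` differs from its quadratic
model `φᵢ` by at most `(H/6)‖x - wᵢ‖³`. With `M ≥ H` the averaged cubic model therefore lies above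
`f`, and below `f + ((M+H)/6) · avg ‖x - wᵢ‖³`; comparing it at `x⁺` and at `x⋆` gives
`f(x⁺) ≤ f(x⋆) + ((M+H)/6) · avg ‖x⋆ - wᵢ‖³`. Since `∇f(x⋆) = 0`, strong convexity gives
`‖wᵢ - x⋆‖² ≤ (2/μ)(f(wᵢ) - f(x⋆))`, and raising this to the power `3/2` finishes.
-/

open scoped RealInnerProductSpace

theorem norm_le_of_norm_deriv_le_mul_pow {E : Type*} [NormedAddCommGroup E] [NormedSpace ℝ E]
    {g g' : ℝ → E} {c : ℝ} {k : ℕ} (hg : ∀ t, HasDerivAt g (g' t) t) (hg0 : g 0 = 0)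
    (hbound : ∀ t, 0 ≤ t → ‖g' t‖ ≤ c * t ^ k) {t : ℝ} (ht : 0 ≤ t) :
    ‖g t‖ ≤ c / (k + 1) * t ^ (k + 1) := by
  have hB (s : ℝ) : HasDerivAt (fun s => c / (k + 1) * s ^ (k + 1)) (c * s ^ k) s := by
    refine ((hasDerivAt_pow (k + 1) s).const_mul (c / (k + 1))).congr_deriv ?_
    push_cast
    field_simp
  exact image_norm_le_of_norm_deriv_right_le_deriv_boundary
    (fun s _ => (hg s).continuousAt.continuousWithinAt) (fun s _ => (hg s).hasDerivWithinAt)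
    (by simp [hg0]) hB (fun s hs => hbound s hs.1) ⟨ht, le_rfl⟩

theorem abs_sub_taylor_two_le {E : Type*} [NormedAddCommGroup E] [NormedSpace ℝ E]
    {f : E → ℝ} {H : ℝ} (hf : ContDiff ℝ 2 f)
    (hLip : ∀ x y, ‖fderiv ℝ (fderiv ℝ f) x - fderiv ℝ (fderiv ℝ f) y‖ ≤ H * ‖x - y‖)
    (w x : E) :
    |f x - (f w + fderiv ℝ f w (x - w) + 1 / 2 * fderiv ℝ (fderiv ℝ f) w (x - w) (x - w))|
      ≤ H / 6 * ‖x - w‖ ^ 3 := by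
  set u := x - w
  set D2 := fderiv ℝ (fderiv ℝ f)
  -- The Taylor remainder `R` along `t ↦ w + t • u` has `R 0 = R' 0 = 0` and
  -- `‖R'' t‖ ≤ H ‖u‖³ t`; integrating twice bounds `R 1`.
  have hγ (t : ℝ) : HasDerivAt (fun s : ℝ => w + s • u) u t := by
    simpa using ((hasDerivAt_id t).smul_const u).const_add w
  have hf' (t : ℝ) : HasDerivAt (fun s : ℝ => f (w + s • u)) (fderiv ℝ f (w + t • u) u) t :=
    (hf.differentiable two_ne_zero _).hasFDerivAt.comp_hasDerivAt t (hγ t)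
  have hDf (t : ℝ) : HasDerivAt (fun s : ℝ => fderiv ℝ f (w + s • u)) (D2 (w + t • u) u) t :=
    ((hf.fderiv_right le_rfl).differentiable one_ne_zero _).hasFDerivAt.comp_hasDerivAt t (hγ t)
  have hR' (t : ℝ) : HasDerivAt (fun s => fderiv ℝ f (w + s • u) u - fderiv ℝ f w u - s * D2 w u u)
      (D2 (w + t • u) u u - D2 w u u) t := by
    refine ((((hDf t).clm_apply (hasDerivAt_const t u)).sub_const _).sub
      ((hasDerivAt_id t).mul_const (D2 w u u))).congr_deriv ?_
    simp
  have hR (t : ℝ) : HasDerivAt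
      (fun s => f (w + s • u) - f w - s * fderiv ℝ f w u - s ^ 2 / 2 * D2 w u u)
      (fderiv ℝ f (w + t • u) u - fderiv ℝ f w u - t * D2 w u u) t := by
    refine ((((hf' t).sub_const _).sub ((hasDerivAt_id t).mul_const _)).sub
      (((hasDerivAt_pow 2 t).div_const 2).mul_const (D2 w u u))).congr_deriv ?_
    simp
  have hR''_le (t : ℝ) (ht : 0 ≤ t) : ‖D2 (w + t • u) u u - D2 w u u‖ ≤ H * ‖u‖ ^ 3 * t ^ 1 :=
    calc ‖(D2 (w + t • u) - D2 w) u u‖ ≤ ‖D2 (w + t • u) - D2 w‖ * ‖u‖ * ‖u‖ :=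
          ContinuousLinearMap.le_opNorm₂ _ _ _
      _ ≤ H * ‖w + t • u - w‖ * ‖u‖ * ‖u‖ := by gcongr; exact hLip _ _
      _ = H * ‖u‖ ^ 3 * t ^ 1 := by
          rw [add_sub_cancel_left, norm_smul, Real.norm_of_nonneg ht]; ring
  have hRbound := norm_le_of_norm_deriv_le_mul_pow hR (by simp)
    (fun t ht => norm_le_of_norm_deriv_le_mul_pow hR' (by simp) hR''_le ht) zero_le_one
  convert hRbound using 1
  · rw [one_smul, add_sub_cancel, Real.norm_eq_abs]
    ring_nf
  · push_cast
    ring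

section InnerProductSpace

open InnerProductSpace

variable {E : Type*} [NormedAddCommGroup E] [InnerProductSpace ℝ E] [CompleteSpace E]

-- Over `ℝ` the conjugate-linear isometry `toDual` is linear, hence differentiable.
theorem fderiv_gradient_apply (f : E → ℝ) (x v : E) :
    fderiv ℝ (gradient f) x v = (toDual ℝ E).symm (fderiv ℝ (fderiv ℝ f) x v) :=
  congrArg (· v) <| LinearIsometryEquiv.comp_fderiv
    (iso := ((toDual ℝ E).symm : StrongDual ℝ E ≃ₗᵢ[ℝ] E)) (f := fderiv ℝ f)

theorem inner_fderiv_gradient_apply (f : E → ℝ) (x v v' : E) :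
    ⟪fderiv ℝ (gradient f) x v, v'⟫ = fderiv ℝ (fderiv ℝ f) x v v' := by
  rw [fderiv_gradient_apply, toDual_symm_apply]

theorem norm_fderiv_gradient_sub (f : E → ℝ) (x y : E) :
    ‖fderiv ℝ (gradient f) x - fderiv ℝ (gradient f) y‖
      = ‖fderiv ℝ (fderiv ℝ f) x - fderiv ℝ (fderiv ℝ f) y‖ :=
  ContinuousLinearMap.opNorm_ext _ _ fun v => by
    rw [sub_apply, sub_apply, fderiv_gradient_apply,
      fderiv_gradient_apply, ← map_sub, LinearIsometryEquiv.norm_map]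

theorem abs_sub_taylor_two_gradient_le {f : E → ℝ} {H : ℝ} (hf : ContDiff ℝ 2 f)
    (hLip : ∀ x y, ‖fderiv ℝ (gradient f) x - fderiv ℝ (gradient f) y‖ ≤ H * ‖x - y‖)
    (w x : E) :
    |f x - (f w + ⟪gradient f w, x - w⟫ + 1 / 2 * ⟪fderiv ℝ (gradient f) w (x - w), x - w⟫)|
      ≤ H / 6 * ‖x - w‖ ^ 3 := by
  rw [inner_gradient_left, inner_fderiv_gradient_apply]
  exact abs_sub_taylor_two_le hf (fun x y => norm_fderiv_gradient_sub f x y ▸ hLip x y) w x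

theorem IsLocalMin.gradient_eq_zero {f : E → ℝ} {a : E} (h : IsLocalMin f a) :
    gradient f a = 0 := by
  simp [gradient, h.fderiv_eq_zero]

end InnerProductSpace

theorem pow_three_le_of_half_mul_sq_le {μ r Δ : ℝ} (hμ : 0 < μ) (hr : 0 ≤ r)
    (h : μ / 2 * r ^ 2 ≤ Δ) : r ^ 3 ≤ 2 * √2 / μ ^ (3 / 2 : ℝ) * Δ ^ (3 / 2 : ℝ) := by
  have hΔ : 0 ≤ Δ := le_trans (by positivity) h
  have hr2 : r ^ 2 ≤ 2 / μ * Δ := by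
    rw [div_mul_eq_mul_div, le_div_iff₀ hμ]; linarith
  have h2 : (2 : ℝ) ^ (3 / 2 : ℝ) = 2 * √2 := by
    rw [show (3 / 2 : ℝ) = 1 + 1 / 2 by norm_num, Real.rpow_add two_pos, Real.rpow_one,
      Real.sqrt_eq_rpow]
  calc r ^ 3 = (r ^ 2) ^ (3 / 2 : ℝ) := by
        rw [← Real.rpow_natCast r 2, ← Real.rpow_mul hr]; norm_num
    _ ≤ (2 / μ * Δ) ^ (3 / 2 : ℝ) := by gcongr
    _ = 2 * √2 / μ ^ (3 / 2 : ℝ) * Δ ^ (3 / 2 : ℝ) := by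
        rw [Real.mul_rpow (by positivity) hΔ, Real.div_rpow zero_le_two hμ.le, h2]

theorem sum_le_of_cubic_model_le {ι E : Type*} [Fintype ι] [SeminormedAddCommGroup E]
    {f φ : ι → E → ℝ} {w : ι → E} {H M c : ℝ} (hc : 0 ≤ c) (hM : H ≤ M)
    (happrox : ∀ i y, |f i y - φ i y| ≤ H / 6 * ‖y - w i‖ ^ 3) {xplus y : E}
    (hxplus : c * ∑ i, (φ i xplus + M / 6 * ‖xplus - w i‖ ^ 3)
      ≤ c * ∑ i, (φ i y + M / 6 * ‖y - w i‖ ^ 3)) :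
    c * ∑ i, f i xplus ≤ c * ∑ i, f i y + (M + H) / 6 * (c * ∑ i, ‖y - w i‖ ^ 3) := by
  have hupper : c * ∑ i, f i xplus ≤ c * ∑ i, (φ i xplus + M / 6 * ‖xplus - w i‖ ^ 3) := by
    gcongr with i
    have hHM : H / 6 * ‖xplus - w i‖ ^ 3 ≤ M / 6 * ‖xplus - w i‖ ^ 3 := by gcongr
    linarith [(abs_le.1 (happrox i xplus)).2]
  have hlower : c * ∑ i, (φ i y + M / 6 * ‖y - w i‖ ^ 3)
      ≤ c * ∑ i, (f i y + (M + H) / 6 * ‖y - w i‖ ^ 3) := by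
    gcongr c * ∑ i, ?_ with i
    rw [add_div, add_mul]
    linarith [(abs_le.1 (happrox i y)).1]
  calc c * ∑ i, f i xplus ≤ c * ∑ i, (f i y + (M + H) / 6 * ‖y - w i‖ ^ 3) :=
        hupper.trans (hxplus.trans hlower)
    _ = c * ∑ i, f i y + (M + H) / 6 * (c * ∑ i, ‖y - w i‖ ^ 3) := by
        rw [Finset.sum_add_distrib, ← Finset.mul_sum]; ring

theorem cubic_newton_functional_decrease_general
    (d n : ℕ)
    (f : Fin n → EuclideanSpace ℝ (Fin d) → ℝ)
    (μ H M : ℝ) (hμ : 0 < μ) (hH : 0 ≤ H) (hM : H ≤ M)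
    (hf : ∀ i, ContDiff ℝ 2 (f i))
    (hLip : ∀ i, ∀ x y : EuclideanSpace ℝ (Fin d),
      ‖fderiv ℝ (gradient (f i)) x - fderiv ℝ (gradient (f i)) y‖ ≤ H * ‖x - y‖)
    (F : EuclideanSpace ℝ (Fin d) → ℝ)
    (hF : F = fun x => (n : ℝ)⁻¹ * ∑ i, f i x)
    (hsc : ∀ x y : EuclideanSpace ℝ (Fin d),
      F y + ⟪gradient F y, x - y⟫ + μ / 2 * ‖x - y‖ ^ 2 ≤ F x)
    (xstar : EuclideanSpace ℝ (Fin d)) (hmin : ∀ x, F xstar ≤ F x)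
    (w : Fin n → EuclideanSpace ℝ (Fin d))
    (φ : Fin n → EuclideanSpace ℝ (Fin d) → ℝ)
    (hφ : ∀ i x, φ i x = f i (w i) + ⟪gradient (f i) (w i), x - w i⟫
      + (1 / 2) * ⟪fderiv ℝ (gradient (f i)) (w i) (x - w i), x - w i⟫)
    (xplus : EuclideanSpace ℝ (Fin d))
    (hxplus : ∀ y : EuclideanSpace ℝ (Fin d),
      (n : ℝ)⁻¹ * ∑ i, (φ i xplus + M / 6 * ‖xplus - w i‖ ^ 3)
        ≤ (n : ℝ)⁻¹ * ∑ i, (φ i y + M / 6 * ‖y - w i‖ ^ 3)) :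
    F xplus - F xstar
      ≤ Real.sqrt 2 * (M + H) / (3 * μ ^ ((3 : ℝ) / 2))
        * ((n : ℝ)⁻¹ * ∑ i, (F (w i) - F xstar) ^ ((3 : ℝ) / 2)) := by
  have hFx (x) : F x = (n : ℝ)⁻¹ * ∑ i, f i x := congrFun hF x
  have happrox (i y) : |f i y - φ i y| ≤ H / 6 * ‖y - w i‖ ^ 3 := by
    rw [hφ]; exact abs_sub_taylor_two_gradient_le (hf i) (hLip i) (w i) y
  have hstep : F xplus ≤ F xstar + (M + H) / 6 * ((n : ℝ)⁻¹ * ∑ i, ‖xstar - w i‖ ^ 3) := by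
    simpa only [hFx] using sum_le_of_cubic_model_le (by positivity) hM happrox (hxplus xstar)
  have hcrit : gradient F xstar = 0 := IsLocalMin.gradient_eq_zero (.of_forall hmin)
  have hcube (i) : ‖xstar - w i‖ ^ 3
      ≤ 2 * √2 / μ ^ (3 / 2 : ℝ) * (F (w i) - F xstar) ^ (3 / 2 : ℝ) := by
    refine pow_three_le_of_half_mul_sq_le hμ (norm_nonneg _) ?_
    have := hsc (w i) xstar
    rw [hcrit, inner_zero_left, norm_sub_rev] at this
    linarith
  have hMH : 0 ≤ (M + H) / 6 := by linarith
  calc F xplus - F xstar ≤ (M + H) / 6 * ((n : ℝ)⁻¹ * ∑ i, ‖xstar - w i‖ ^ 3) := by linarith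
    _ ≤ (M + H) / 6 * ((n : ℝ)⁻¹
          * ∑ i, 2 * √2 / μ ^ (3 / 2 : ℝ) * (F (w i) - F xstar) ^ (3 / 2 : ℝ)) := by
        gcongr with i; exact hcube i
    _ = √2 * (M + H) / (3 * μ ^ (3 / 2 : ℝ))
          * ((n : ℝ)⁻¹ * ∑ i, (F (w i) - F xstar) ^ (3 / 2 : ℝ)) := by
        rw [← Finset.mul_sum]; field_simp; ring

theorem cubic_newton_functional_decrease
    (d n : ℕ) (hn : 0 < n)
    (f : Fin n → EuclideanSpace ℝ (Fin d) → ℝ)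
    (μ H M : ℝ) (hμ : 0 < μ) (hH : 0 ≤ H) (hM : H ≤ M)
    (hf : ∀ i, ContDiff ℝ 2 (f i))
    (hLip : ∀ i, ∀ x y : EuclideanSpace ℝ (Fin d),
      ‖fderiv ℝ (gradient (f i)) x - fderiv ℝ (gradient (f i)) y‖ ≤ H * ‖x - y‖)
    (F : EuclideanSpace ℝ (Fin d) → ℝ)
    (hF : F = fun x => (n : ℝ)⁻¹ * ∑ i, f i x)
    (hsc : ∀ x y : EuclideanSpace ℝ (Fin d),
      F y + ⟪gradient F y, x - y⟫ + μ / 2 * ‖x - y‖ ^ 2 ≤ F x)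
    (xstar : EuclideanSpace ℝ (Fin d)) (hmin : ∀ x, F xstar ≤ F x)
    (w : Fin n → EuclideanSpace ℝ (Fin d))
    (φ : Fin n → EuclideanSpace ℝ (Fin d) → ℝ)
    (hφ : ∀ i x, φ i x = f i (w i) + ⟪gradient (f i) (w i), x - w i⟫
      + (1 / 2) * ⟪fderiv ℝ (gradient (f i)) (w i) (x - w i), x - w i⟫)
    (xplus : EuclideanSpace ℝ (Fin d))
    (hxplus : ∀ y : EuclideanSpace ℝ (Fin d),
      (n : ℝ)⁻¹ * ∑ i, (φ i xplus + M / 6 * ‖xplus - w i‖ ^ 3)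
        ≤ (n : ℝ)⁻¹ * ∑ i, (φ i y + M / 6 * ‖y - w i‖ ^ 3)) :
    F xplus - F xstar
      ≤ Real.sqrt 2 * (M + H) / (3 * μ ^ ((3 : ℝ) / 2))
        * ((n : ℝ)⁻¹ * ∑ i, (F (w i) - F xstar) ^ ((3 : ℝ) / 2)) :=
  cubic_newton_functional_decrease_general d n f μ H M hμ hH hM hf hLip F hF hsc xstar hmin w φ hφ
    xplus hxplus
end

section
/- If every fᵢ: ℝ^d → ℝ is μ-strongly convex with H-Lipschitz Hessian, and the points w₁,…,wₙ satisfy ‖wᵢ − x⋆‖ ≤ μ/H for all i (where x⋆ minimizes f = (1/n)∑fᵢ), then the stochastic Newton update x⁺ = [(1/n)∑∇²fᵢ(wᵢ)]⁻¹[(1/n)∑(∇²fᵢ(wᵢ)wᵢ − ∇fᵢ(wᵢ))] satisfies ‖x⁺ − x⋆‖ ≤ μ/(2H) < μ/H; in particular the ball {w : ‖w − x⋆‖ ≤ μ/H} is invariant under the update. -/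
/-!
Let `A` be the averaged Hessian `n⁻¹ ∑ ∇²fᵢ(wᵢ)`. Subtracting `A x⋆` from the Newton equation
and using `∑ ∇fᵢ(x⋆) = 0` exhibits `A (x⁺ - x⋆)` as the average of the Taylor remainders
`∇fᵢ(x⋆) - ∇fᵢ(wᵢ) - ∇²fᵢ(wᵢ)(x⋆ - wᵢ)`, each of norm at most `H/2 ‖wᵢ - x⋆‖² ≤ μ²/(2H)`
because the Hessian is `H`-Lipschitz. Since `A` is `μ`-coercive,
`‖x⁺ - x⋆‖ ≤ ‖A (x⁺ - x⋆)‖ / μ ≤ μ/(2H)`.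
-/

open scoped RealInnerProductSpace
open Finset Set

theorem norm_sub_sub_fderiv_le_of_lipschitz_fderiv
    {E F : Type*} [NormedAddCommGroup E] [NormedSpace ℝ E]
    [NormedAddCommGroup F] [NormedSpace ℝ F]
    {g : E → F} (hg : Differentiable ℝ g) {H : ℝ}
    (hLip : ∀ x y, ‖fderiv ℝ g x - fderiv ℝ g y‖ ≤ H * ‖x - y‖) (a b : E) :
    ‖g b - g a - fderiv ℝ g a (b - a)‖ ≤ H / 2 * ‖b - a‖ ^ 2 := by
  set T := fderiv ℝ g
  let φ : ℝ → F := fun t => g (a + t • (b - a)) - g a - t • T a (b - a)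
  have hφ : ∀ t, HasDerivAt φ (T (a + t • (b - a)) (b - a) - T a (b - a)) t := by
    intro t
    have hline : HasDerivAt (fun t : ℝ => a + t • (b - a)) (b - a) t := by
      simpa using ((hasDerivAt_id t).smul_const (b - a)).const_add a
    convert (((hg _).hasFDerivAt.comp_hasDerivAt t hline).sub_const (g a)).sub
      ((hasDerivAt_id t).smul_const (T a (b - a))) using 1
    · rfl
    · rw [one_smul]
  have hparabola : ∀ t,
      HasDerivAt (fun t : ℝ => H / 2 * ‖b - a‖ ^ 2 * t ^ 2) (H * ‖b - a‖ ^ 2 * t) t := fun t =>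
    ((hasDerivAt_pow 2 t).const_mul (H / 2 * ‖b - a‖ ^ 2)).congr_deriv (by push_cast; ring)
  have bound : ∀ t ∈ Ico (0 : ℝ) 1,
      ‖T (a + t • (b - a)) (b - a) - T a (b - a)‖ ≤ H * ‖b - a‖ ^ 2 * t := by
    rintro t ⟨ht, -⟩
    calc ‖T (a + t • (b - a)) (b - a) - T a (b - a)‖
        ≤ ‖T (a + t • (b - a)) - T a‖ * ‖b - a‖ :=
          (T (a + t • (b - a)) - T a).le_opNorm (b - a)
      _ ≤ H * (t * ‖b - a‖) * ‖b - a‖ := by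
          gcongr
          simpa [norm_smul, abs_of_nonneg ht] using hLip (a + t • (b - a)) a
      _ = H * ‖b - a‖ ^ 2 * t := by ring
  -- comparing with the parabola `t ↦ H/2 ‖b - a‖² t²` yields the sharp constant `H/2`
  have hφ1 := image_norm_le_of_norm_deriv_right_le_deriv_boundary
    (fun t _ => (hφ t).continuousAt.continuousWithinAt) (fun t _ => (hφ t).hasDerivWithinAt)
    (by simp [φ]) hparabola bound (right_mem_Icc.2 zero_le_one)
  simpa [φ] using hφ1

theorem ContDiff.differentiable_gradient {F : Type*} [NormedAddCommGroup F]
    [InnerProductSpace ℝ F] [CompleteSpace F] {f : F → ℝ} (hf : ContDiff ℝ 2 f) :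
    Differentiable ℝ (gradient f) :=
  (InnerProductSpace.toDual ℝ F).symm.differentiable.comp
    ((hf.fderiv_right (m := 1) (by norm_num)).differentiable (by norm_num))

section Coercive

variable {E : Type*} [NormedAddCommGroup E] [InnerProductSpace ℝ E] {μ : ℝ}

theorem norm_le_norm_div_of_mul_sq_le_inner (hμ : 0 < μ) {u v : E}
    (h : μ * ‖v‖ ^ 2 ≤ ⟪u, v⟫) : ‖v‖ ≤ ‖u‖ / μ := by
  rw [le_div_iff₀' hμ]
  rcases (norm_nonneg v).eq_or_lt with hv | hv
  · rw [← hv, mul_zero]; exact norm_nonneg u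
  · refine le_of_mul_le_mul_right ?_ hv
    calc μ * ‖v‖ * ‖v‖ = μ * ‖v‖ ^ 2 := by ring
      _ ≤ ⟪u, v⟫ := h
      _ ≤ ‖u‖ * ‖v‖ := real_inner_le_norm u v

theorem mul_sq_le_inner_inv_card_smul_sum_apply {ι : Type*} [Fintype ι] [Nonempty ι]
    (T : ι → E →L[ℝ] E) {v : E} (hT : ∀ i, μ * ‖v‖ ^ 2 ≤ ⟪T i v, v⟫) :
    μ * ‖v‖ ^ 2 ≤ ⟪((Fintype.card ι : ℝ)⁻¹ • ∑ i, T i) v, v⟫ := by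
  have hcard : (0 : ℝ) < Fintype.card ι := by exact_mod_cast Fintype.card_pos
  rw [smul_apply, _root_.sum_apply, real_inner_smul_left, sum_inner, le_inv_mul_iff₀ hcard]
  simpa using Finset.card_nsmul_le_sum univ _ _ fun i _ => hT i

end Coercive

theorem norm_inv_card_smul_sum_le {E ι : Type*} [SeminormedAddCommGroup E] [NormedSpace ℝ E]
    [Fintype ι] [Nonempty ι] {x : ι → E} {c : ℝ} (hx : ∀ i, ‖x i‖ ≤ c) :
    ‖(Fintype.card ι : ℝ)⁻¹ • ∑ i, x i‖ ≤ c := by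
  have hcard : (0 : ℝ) < Fintype.card ι := by exact_mod_cast Fintype.card_pos
  rw [norm_smul, Real.norm_of_nonneg (by positivity), inv_mul_le_iff₀ hcard]
  simpa using norm_sum_le_of_le univ fun i _ => hx i

theorem newton_step_sub_eq {E ι : Type*} [AddCommGroup E] [Module ℝ E] [TopologicalSpace E]
    [IsTopologicalAddGroup E] [ContinuousConstSMul ℝ E] [Fintype ι]
    (c : ℝ) (g : ι → E → E) (T : ι → E →L[ℝ] E) (w : ι → E) {xstar xplus : E}
    (hstar : ∑ i, g i xstar = 0)
    (hstep : (c • ∑ i, T i) xplus = c • ∑ i, (T i (w i) - g i (w i))) :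
    (c • ∑ i, T i) (xplus - xstar) = c • ∑ i, (g i xstar - g i (w i) - T i (xstar - w i)) := by
  simp only [map_sub, hstep, sum_sub_distrib, hstar, smul_apply, _root_.sum_apply, smul_sub,
    smul_zero]
  abel

theorem stochastic_newton_ball_invariance
    (d n : ℕ) (hn : 0 < n)
    (f : Fin n → EuclideanSpace ℝ (Fin d) → ℝ)
    (μ H : ℝ) (hμ : 0 < μ) (hH : 0 < H)
    (hf : ∀ i, ContDiff ℝ 2 (f i))
    (hsc : ∀ i, ∀ x v : EuclideanSpace ℝ (Fin d),
      μ * ‖v‖ ^ 2 ≤ ⟪fderiv ℝ (gradient (f i)) x v, v⟫)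
    (hLip : ∀ i, ∀ x y : EuclideanSpace ℝ (Fin d),
      ‖fderiv ℝ (gradient (f i)) x - fderiv ℝ (gradient (f i)) y‖ ≤ H * ‖x - y‖)
    (xstar : EuclideanSpace ℝ (Fin d))
    (hstar : ∑ i, gradient (f i) xstar = 0)
    (w : Fin n → EuclideanSpace ℝ (Fin d))
    (hw : ∀ i, ‖w i - xstar‖ ≤ μ / H)
    (xplus : EuclideanSpace ℝ (Fin d))
    (hstep : ((n : ℝ)⁻¹ • ∑ i, fderiv ℝ (gradient (f i)) (w i)) xplus
      = (n : ℝ)⁻¹ • ∑ i, (fderiv ℝ (gradient (f i)) (w i) (w i) - gradient (f i) (w i))) :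
    ‖xplus - xstar‖ ≤ μ / (2 * H) ∧ μ / (2 * H) < μ / H := by
  have : Nonempty (Fin n) := ⟨⟨0, hn⟩⟩
  set A := (n : ℝ)⁻¹ • ∑ i, fderiv ℝ (gradient (f i)) (w i)
  have hcard : (Fintype.card (Fin n) : ℝ) = n := by rw [Fintype.card_fin]
  have hremainder : ∀ i, ‖gradient (f i) xstar - gradient (f i) (w i)
      - fderiv ℝ (gradient (f i)) (w i) (xstar - w i)‖ ≤ μ ^ 2 / (2 * H) := fun i =>
    calc _ ≤ H / 2 * ‖xstar - w i‖ ^ 2 :=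
          norm_sub_sub_fderiv_le_of_lipschitz_fderiv (hf i).differentiable_gradient (hLip i) _ _
      _ ≤ H / 2 * (μ / H) ^ 2 := by rw [norm_sub_rev]; gcongr; exact hw i
      _ = μ ^ 2 / (2 * H) := by field_simp
  have herror : ‖A (xplus - xstar)‖ ≤ μ ^ 2 / (2 * H) := by
    rw [newton_step_sub_eq _ _ _ w hstar hstep, ← hcard]
    exact norm_inv_card_smul_sum_le hremainder
  have hcoercive : μ * ‖xplus - xstar‖ ^ 2 ≤ ⟪A (xplus - xstar), xplus - xstar⟫ := by
    simpa only [hcard] using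
      mul_sq_le_inner_inv_card_smul_sum_apply _ fun i => hsc i (w i) (xplus - xstar)
  refine ⟨?_, div_lt_div_of_pos_left hμ hH (by linarith)⟩
  calc ‖xplus - xstar‖ ≤ ‖A (xplus - xstar)‖ / μ :=
        norm_le_norm_div_of_mul_sq_le_inner hμ hcoercive
    _ ≤ μ ^ 2 / (2 * H) / μ := by gcongr
    _ = μ / (2 * H) := by field_simp
end
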